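/- (Exclusion lemma.) Let m ≤ n+1 and f ∈ H_d[m] with f ≠ 0, and let x, y ∈ S^n be such that 0 < d_S(x,y) ≤ √2. Then ‖f(x) − f(y)‖ < ‖f‖·√D·d_S(x,y). In particular, if f(x) ≠ 0, then f has no zero in the angular ball B_S(x, ‖f(x)‖/(‖f‖√D)) := {y ∈ S^n : d_S(y,x) < ‖f(x)‖/(‖f‖√D)}. -/

import Mathlib

open Function Metric Filter
open scoped ENNReal

noncomputable section

/-- Evaluation of a polynomial system as a map between Euclidean spaces. -/
def evalSys {n m : ℕ} (f : Fin m → MvPolynomial (Fin (n + 1)) ℝ) :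
    EuclideanSpace ℝ (Fin (n + 1)) → EuclideanSpace ℝ (Fin m) :=
  fun x => WithLp.toLp 2 (fun i => MvPolynomial.eval (fun j => x j) (f i))

/-- Moore–Penrose inverse A† = Aᵀ (A Aᵀ)⁻¹ of a (surjective) continuous linear map
between real inner product spaces. -/
def pinv {E F : Type*} [NormedAddCommGroup E] [InnerProductSpace ℝ E] [CompleteSpace E]
    [NormedAddCommGroup F] [InnerProductSpace ℝ F] [CompleteSpace F]
    (A : E →L[ℝ] F) : F →L[ℝ] E :=
  (ContinuousLinearMap.adjoint A).comp (Ring.inverse (A.comp (ContinuousLinearMap.adjoint A)))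

/-- The diagonal matrix Δ(x) with diagonal entries ‖x‖^(dᵢ−1)·√dᵢ, as a linear map ℝ^m → ℝ^m. -/
def Delta {n m : ℕ} (d : Fin m → ℕ) (x : EuclideanSpace ℝ (Fin (n + 1))) :
    EuclideanSpace ℝ (Fin m) →L[ℝ] EuclideanSpace ℝ (Fin m) :=
  LinearMap.toContinuousLinearMap
    (Matrix.toEuclideanLin (Matrix.diagonal fun i => ‖x‖ ^ (d i - 1) * Real.sqrt (d i)))

/-- Weyl norm squared of a polynomial system: Σᵢ Σ_a coeff²·(dᵢ choose a)⁻¹. -/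
def weylNormSq {n m : ℕ} (f : Fin m → MvPolynomial (Fin (n + 1)) ℝ) : ℝ :=
  ∑ i, ∑ a ∈ (f i).support, ((f i).coeff a) ^ 2 / (Nat.multinomial a.support a : ℝ)

/-- Weyl norm of a polynomial system. -/
def weylNorm {n m : ℕ} (f : Fin m → MvPolynomial (Fin (n + 1)) ℝ) : ℝ :=
  Real.sqrt (weylNormSq f)

/-- μ_norm(f,x) = ‖f‖·‖Df(x)†·Δ(x)‖ (real-valued formula, meaningful when Df(x) is surjective). -/
def munormR {n m : ℕ} (d : Fin m → ℕ) (f : Fin m → MvPolynomial (Fin (n + 1)) ℝ)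
    (x : EuclideanSpace ℝ (Fin (n + 1))) : ℝ :=
  weylNorm f * ‖(pinv (fderiv ℝ (evalSys f) x)).comp (Delta d x)‖

open Classical in
/-- μ_norm(f,x), with value ∞ when Df(x) is not surjective. -/
def munormE {n m : ℕ} (d : Fin m → ℕ) (f : Fin m → MvPolynomial (Fin (n + 1)) ℝ)
    (x : EuclideanSpace ℝ (Fin (n + 1))) : ℝ≥0∞ :=
  if Surjective ⇑(fderiv ℝ (evalSys f) x) then ENNReal.ofReal (munormR d f x) else ⊤

/-- The maximal degree D. -/
def Dmax {m : ℕ} (d : Fin m → ℕ) : ℕ := Finset.univ.sup d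

/-- The angular distance d_S(x₁,x₂) = arccos⟨x₁,x₂⟩ on the unit sphere. -/
def angDist {k : ℕ} (x₁ x₂ : EuclideanSpace ℝ (Fin k)) : ℝ :=
  Real.arccos (inner ℝ x₁ x₂)

/-!
Writing `p(x) - p(y) = Σ_a p_a (x^a - y^a)` and applying Cauchy–Schwarz with the weights
`(k choose a)` of the Weyl norm, the multinomial theorem evaluates the second factor, so that for
`p` homogeneous of degree `k`
`|p(x) - p(y)|² ≤ ‖p‖² (‖x‖^{2k} + ‖y‖^{2k} - 2⟨x, y⟩^k)`.
On the sphere Bernoulli's inequality bounds `2 - 2⟨x, y⟩^k` by `k (2 - 2⟨x, y⟩) = k ‖x - y‖²`,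
so `f` is `‖f‖ √D`-Lipschitz for the chordal distance, and the chord is shorter than the arc:
`‖x - y‖² = 2 - 2 cos θ < θ²` for `θ ≠ 0`.
-/

lemma Finsupp.multinomial_pos {σ : Type*} (a : σ →₀ ℕ) : 0 < a.multinomial :=
  Nat.multinomial_pos _ _

lemma one_sub_pow_le_mul_one_sub {c : ℝ} (hc : -1 ≤ c) (k : ℕ) : 1 - c ^ k ≤ k * (1 - c) := by
  nlinarith [one_add_mul_sub_le_pow hc k]

namespace MvPolynomial

open Finset

variable {σ : Type*}

def weylNormSq (p : MvPolynomial σ ℝ) : ℝ :=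
  ∑ a ∈ p.support, p.coeff a ^ 2 / a.multinomial

lemma weylNormSq_nonneg (p : MvPolynomial σ ℝ) : 0 ≤ p.weylNormSq :=
  sum_nonneg fun _ _ => by positivity

lemma weylNormSq_pos {p : MvPolynomial σ ℝ} (hp : p ≠ 0) : 0 < p.weylNormSq := by
  obtain ⟨a, ha⟩ := support_nonempty.mpr hp
  have hpos : 0 < p.coeff a ^ 2 / a.multinomial := by
    have := Finsupp.multinomial_pos a
    have := mem_support_iff.mp ha
    positivity
  exact sum_pos' (fun _ _ => by positivity) ⟨a, ha, hpos⟩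

variable [Fintype σ] [DecidableEq σ]

lemma sum_support_le_sum_piAntidiag {p : MvPolynomial σ ℝ} {k : ℕ} (hp : p.IsHomogeneous k)
    {F : (σ → ℕ) → ℝ} (hF : ∀ c, 0 ≤ F c) :
    ∑ a ∈ p.support, F a ≤ ∑ c ∈ piAntidiag univ k, F c := by
  rw [← sum_image fun a _ b _ h => DFunLike.coe_injective h]
  refine sum_le_sum_of_subset_of_nonneg ?_ fun c _ _ => hF c
  intro c hc
  obtain ⟨a, ha, rfl⟩ := mem_image.mp hc
  have hdeg := hp (mem_support_iff.mp ha)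
  simp only [mem_piAntidiag, ne_eq, mem_univ, implies_true, and_true]
  simpa [Finsupp.weight, Finsupp.linearCombination, Finsupp.sum_fintype] using hdeg

lemma sq_sum_coeff_mul_le {p : MvPolynomial σ ℝ} {k : ℕ} (hp : p.IsHomogeneous k)
    (g : (σ → ℕ) → ℝ) :
    (∑ a ∈ p.support, p.coeff a * g a) ^ 2 ≤
      p.weylNormSq * ∑ c ∈ piAntidiag univ k, (Nat.multinomial univ c : ℝ) * g c ^ 2 := by
  have hmult (a : σ →₀ ℕ) : (a.multinomial : ℝ) = Nat.multinomial univ a := by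
    rw [Finsupp.multinomial_eq_of_support_subset (subset_univ _)]
  calc (∑ a ∈ p.support, p.coeff a * g a) ^ 2
      ≤ p.weylNormSq * ∑ a ∈ p.support, (a.multinomial : ℝ) * g a ^ 2 := by
        refine sum_sq_le_sum_mul_sum_of_sq_le_mul _ (fun _ _ => by positivity)
          (fun _ _ => by positivity) fun a _ => le_of_eq ?_
        have : (a.multinomial : ℝ) ≠ 0 := by exact_mod_cast a.multinomial_pos.ne'
        field_simp
    _ ≤ _ := by
        simp_rw [hmult]
        gcongr
        · exact p.weylNormSq_nonneg
        · exact sum_support_le_sum_piAntidiag hp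
            (F := fun c => (Nat.multinomial univ c : ℝ) * g c ^ 2) fun c => by positivity

lemma sum_piAntidiag_multinomial_mul_sq_sub (x y : σ → ℝ) (k : ℕ) :
    ∑ c ∈ piAntidiag univ k, (Nat.multinomial univ c : ℝ) * (∏ i, x i ^ c i - ∏ i, y i ^ c i) ^ 2
      = (∑ i, x i ^ 2) ^ k + (∑ i, y i ^ 2) ^ k - 2 * (∑ i, x i * y i) ^ k := by
  simp_rw [sum_pow_eq_sum_piAntidiag, mul_sum, ← sum_add_distrib, ← sum_sub_distrib, mul_pow,
    prod_mul_distrib, ← pow_mul, mul_comm 2, pow_mul, prod_pow]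
  exact sum_congr rfl fun c _ => by ring

lemma sq_eval_sub_eval_le {p : MvPolynomial σ ℝ} {k : ℕ} (hp : p.IsHomogeneous k)
    (x y : σ → ℝ) :
    (eval x p - eval y p) ^ 2 ≤
      p.weylNormSq * ((∑ i, x i ^ 2) ^ k + (∑ i, y i ^ 2) ^ k - 2 * (∑ i, x i * y i) ^ k) := by
  rw [← sum_piAntidiag_multinomial_mul_sq_sub, eval_eq', eval_eq', ← sum_sub_distrib]
  simp_rw [← mul_sub]
  exact sq_sum_coeff_mul_le hp fun c => ∏ i, x i ^ c i - ∏ i, y i ^ c i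

lemma sq_eval_sub_eval_le_of_norm_eq_one {p : MvPolynomial σ ℝ} {k : ℕ}
    (hp : p.IsHomogeneous k) {x y : EuclideanSpace ℝ σ} (hx : ‖x‖ = 1) (hy : ‖y‖ = 1) :
    (eval x.ofLp p - eval y.ofLp p) ^ 2 ≤ p.weylNormSq * k * ‖x - y‖ ^ 2 := by
  have hsq (z : EuclideanSpace ℝ σ) (hz : ‖z‖ = 1) : ∑ i, z.ofLp i ^ 2 = 1 := by
    rw [← EuclideanSpace.real_norm_sq_eq, hz, one_pow]
  have hinner : ∑ i, x.ofLp i * y.ofLp i = inner ℝ x y := by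
    simp [PiLp.inner_apply, mul_comm]
  have hc : -1 ≤ (inner ℝ x y : ℝ) := by
    have := abs_real_inner_le_norm x y
    rw [hx, hy, mul_one] at this
    exact neg_le_of_abs_le this
  calc (eval x.ofLp p - eval y.ofLp p) ^ 2
      ≤ _ := sq_eval_sub_eval_le hp x.ofLp y.ofLp
    _ = p.weylNormSq * (2 * (1 - inner ℝ x y ^ k)) := by
        rw [hsq x hx, hsq y hy, hinner]; ring
    _ ≤ p.weylNormSq * (2 * (k * (1 - inner ℝ x y))) := by
        gcongr
        · exact p.weylNormSq_nonneg
        · exact one_sub_pow_le_mul_one_sub hc k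
    _ = p.weylNormSq * k * ‖x - y‖ ^ 2 := by
        rw [norm_sub_sq_real, hx, hy]; ring

end MvPolynomial

lemma weylNormSq_eq_sum {n m : ℕ} (f : Fin m → MvPolynomial (Fin (n + 1)) ℝ) :
    weylNormSq f = ∑ i, (f i).weylNormSq := rfl

lemma le_Dmax {m : ℕ} (d : Fin m → ℕ) (i : Fin m) : d i ≤ Dmax d :=
  Finset.le_sup (Finset.mem_univ i)

lemma norm_evalSys_sub_le {n m : ℕ} {d : Fin m → ℕ} {f : Fin m → MvPolynomial (Fin (n + 1)) ℝ}
    (hf : ∀ i, (f i).IsHomogeneous (d i)) {x y : EuclideanSpace ℝ (Fin (n + 1))}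
    (hx : ‖x‖ = 1) (hy : ‖y‖ = 1) :
    ‖evalSys f x - evalSys f y‖ ≤ weylNorm f * Real.sqrt (Dmax d) * ‖x - y‖ := by
  have hW : weylNorm f ^ 2 = weylNormSq f :=
    Real.sq_sqrt (Finset.sum_nonneg fun i _ => (f i).weylNormSq_nonneg)
  refine (pow_le_pow_iff_left₀ (norm_nonneg _)
    (mul_nonneg (mul_nonneg (Real.sqrt_nonneg _) (Real.sqrt_nonneg _)) (norm_nonneg _))
    two_ne_zero).mp ?_
  calc ‖evalSys f x - evalSys f y‖ ^ 2
      = ∑ i, (MvPolynomial.eval x.ofLp (f i) - MvPolynomial.eval y.ofLp (f i)) ^ 2 := by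
        rw [EuclideanSpace.real_norm_sq_eq]; rfl
    _ ≤ ∑ i, (f i).weylNormSq * d i * ‖x - y‖ ^ 2 :=
        Finset.sum_le_sum fun i _ => MvPolynomial.sq_eval_sub_eval_le_of_norm_eq_one (hf i) hx hy
    _ ≤ ∑ i, (f i).weylNormSq * Dmax d * ‖x - y‖ ^ 2 := by
        gcongr with i
        · exact (f i).weylNormSq_nonneg
        · exact_mod_cast le_Dmax d i
    _ = (weylNorm f * Real.sqrt (Dmax d) * ‖x - y‖) ^ 2 := by
        rw [mul_pow, mul_pow, hW, Real.sq_sqrt (Nat.cast_nonneg _), weylNormSq_eq_sum,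
          Finset.sum_mul, Finset.sum_mul]

section angDist

variable {k : ℕ} {x y : EuclideanSpace ℝ (Fin k)}

lemma angDist_nonneg : 0 ≤ angDist x y :=
  Real.arccos_nonneg _

lemma norm_sub_sq_eq_two_sub_two_cos_angDist (hx : ‖x‖ = 1) (hy : ‖y‖ = 1) :
    ‖x - y‖ ^ 2 = 2 - 2 * Real.cos (angDist x y) := by
  have hc := abs_real_inner_le_norm x y
  rw [hx, hy, mul_one] at hc
  rw [norm_sub_sq_real, hx, hy, angDist, Real.cos_arccos (neg_le_of_abs_le hc) (le_of_abs_le hc)]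
  ring

lemma norm_sub_le_angDist (hx : ‖x‖ = 1) (hy : ‖y‖ = 1) : ‖x - y‖ ≤ angDist x y := by
  refine (pow_le_pow_iff_left₀ (norm_nonneg _) angDist_nonneg two_ne_zero).mp ?_
  rw [norm_sub_sq_eq_two_sub_two_cos_angDist hx hy]
  linarith [Real.one_sub_sq_div_two_le_cos (x := angDist x y)]

lemma norm_sub_lt_angDist (hx : ‖x‖ = 1) (hy : ‖y‖ = 1) (h : 0 < angDist x y) :
    ‖x - y‖ < angDist x y := by
  refine (pow_lt_pow_iff_left₀ (norm_nonneg _) h.le two_ne_zero).mp ?_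
  rw [norm_sub_sq_eq_two_sub_two_cos_angDist hx hy]
  linarith [Real.one_sub_sq_div_two_lt_cos h.ne']

end angDist

lemma weylNorm_mul_sqrt_Dmax_pos {n m : ℕ} {d : Fin m → ℕ} (hd : ∀ i, 1 ≤ d i)
    {f : Fin m → MvPolynomial (Fin (n + 1)) ℝ} (hf0 : f ≠ 0) :
    0 < weylNorm f * Real.sqrt (Dmax d) := by
  obtain ⟨i, hi⟩ := Function.ne_iff.mp hf0
  have hW : 0 < weylNormSq f := by
    rw [weylNormSq_eq_sum]
    exact Finset.sum_pos' (fun j _ => (f j).weylNormSq_nonneg)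
      ⟨i, Finset.mem_univ i, MvPolynomial.weylNormSq_pos hi⟩
  have hD : (0 : ℝ) < Dmax d := by exact_mod_cast (hd i).trans (le_Dmax d i)
  exact mul_pos (Real.sqrt_pos.mpr hW) (Real.sqrt_pos.mpr hD)

theorem statement9_general {n m : ℕ} (d : Fin m → ℕ) (hd : ∀ i, 1 ≤ d i)
    (f : Fin m → MvPolynomial (Fin (n + 1)) ℝ) (hf : ∀ i, (f i).IsHomogeneous (d i))
    (hf0 : f ≠ 0)
    (x y : EuclideanSpace ℝ (Fin (n + 1)))
    (hx : x ∈ Metric.sphere (0 : EuclideanSpace ℝ (Fin (n + 1))) 1)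
    (hy : y ∈ Metric.sphere (0 : EuclideanSpace ℝ (Fin (n + 1))) 1)
    (h1 : 0 < angDist x y) :
    ‖evalSys f x - evalSys f y‖ < weylNorm f * Real.sqrt (Dmax d) * angDist x y ∧
      (evalSys f x ≠ 0 →
        ∀ z ∈ Metric.sphere (0 : EuclideanSpace ℝ (Fin (n + 1))) 1,
          angDist z x < ‖evalSys f x‖ / (weylNorm f * Real.sqrt (Dmax d)) →
            evalSys f z ≠ 0) := by
  rw [mem_sphere_zero_iff_norm] at hx hy
  have hpos := weylNorm_mul_sqrt_Dmax_pos hd hf0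
  refine ⟨(norm_evalSys_sub_le hf hx hy).trans_lt
    (mul_lt_mul_of_pos_left (norm_sub_lt_angDist hx hy h1) hpos), ?_⟩
  intro _ z hz hzx hfz
  rw [mem_sphere_zero_iff_norm] at hz
  have hle : ‖evalSys f x‖ ≤ weylNorm f * Real.sqrt (Dmax d) * angDist z x := by
    simpa [hfz] using (norm_evalSys_sub_le hf hz hx).trans
      (mul_le_mul_of_nonneg_left (norm_sub_le_angDist hz hx) hpos.le)
  rw [lt_div_iff₀ hpos] at hzx
  linarith

/-- (Exclusion lemma.) If 0 < d_S(x,y) ≤ √2 then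
‖f(x) − f(y)‖ < ‖f‖·√D·d_S(x,y); in particular, if f(x) ≠ 0 then f has no zero in the
ball B_S(x, ‖f(x)‖/(‖f‖√D)). -/
theorem statement9 {n m : ℕ} (hm : m ≤ n + 1) (d : Fin m → ℕ) (hd : ∀ i, 1 ≤ d i)
    (f : Fin m → MvPolynomial (Fin (n + 1)) ℝ) (hf : ∀ i, (f i).IsHomogeneous (d i))
    (hf0 : f ≠ 0)
    (x y : EuclideanSpace ℝ (Fin (n + 1)))
    (hx : x ∈ Metric.sphere (0 : EuclideanSpace ℝ (Fin (n + 1))) 1)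
    (hy : y ∈ Metric.sphere (0 : EuclideanSpace ℝ (Fin (n + 1))) 1)
    (h1 : 0 < angDist x y) (h2 : angDist x y ≤ Real.sqrt 2) :
    ‖evalSys f x - evalSys f y‖ < weylNorm f * Real.sqrt (Dmax d) * angDist x y ∧
      (evalSys f x ≠ 0 →
        ∀ z ∈ Metric.sphere (0 : EuclideanSpace ℝ (Fin (n + 1))) 1,
          angDist z x < ‖evalSys f x‖ / (weylNorm f * Real.sqrt (Dmax d)) →
            evalSys f z ≠ 0) :=
  statement9_general d hd f hf hf0 x y hx hy h1
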